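/- arXiv:2210.15465 — 6 statements merged into one kernel-verified Lean document; each statement's English description precedes it below -/
import Mathlib

section
/- Let n ≥ 2 be a natural number, let a be a natural number with 0 ≤ a ≤ F_{n-1}, and b a natural number with 0 ≤ b ≤ F_n, not both a = F_{n-1} and b = F_n. Then the polynomial p(x) = x^n − (F_n − b)·x − (F_{n-1} − a) has exactly one positive real root. -/
/-!
Put `A = F_{n-1} - a ≥ 0` and `B = F_n - b ≥ 0`, not both zero. The polynomial `x ^ n - B x - A`
is negative at a small positive point and positive at `A + B + 1`, so it has a positive root by the
intermediate value theorem. Dividing by `x > 0`, the positive roots are the solutions of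
`x ^ (n - 1) - A / x = B`, whose left-hand side is strictly increasing on `(0, ∞)`; hence the root
is unique.
-/

open Set

theorem strictMonoOn_pow_sub_div {A : ℝ} (hA : 0 ≤ A) {m : ℕ} (hm : m ≠ 0) :
    StrictMonoOn (fun x : ℝ => x ^ m - A / x) (Ioi 0) := by
  intro x hx y hy hxy
  have hpow : x ^ m < y ^ m := pow_lt_pow_left₀ hxy (le_of_lt hx) hm
  have hdiv : A / y ≤ A / x := div_le_div_of_nonneg_left hA hx hxy.le
  show x ^ m - A / x < y ^ m - A / y
  linarith

theorem exists_pos_pow_eq_mul_add {n : ℕ} (hn : 2 ≤ n) {A B : ℝ} (hA : 0 ≤ A)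
    (hAB : 0 < A + B) : ∃ x : ℝ, 0 < x ∧ x ^ n = B * x + A := by
  set f : ℝ → ℝ := fun x => x ^ n - B * x - A
  -- `ε ^ n ≤ ε ^ 2 < (A + B) ε ≤ B ε + A` once `ε ≤ 1` and `ε < A + B`.
  set ε : ℝ := min 1 (A + B) / 2 with hε_def
  have hε : 0 < ε := by positivity
  have hε1 : ε ≤ 1 := by linarith [hε_def, min_le_left 1 (A + B)]
  have hεAB : ε < A + B := by linarith [hε_def, min_le_right 1 (A + B)]
  have hf_ε : f ε < 0 := by
    have : ε ^ n ≤ ε ^ 2 := pow_le_pow_of_le_one hε.le hε1 hn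
    simp only [f]
    nlinarith
  set M : ℝ := A + B + 1
  have hf_M : 0 < f M := by
    have : M ^ 2 ≤ M ^ n := pow_le_pow_right₀ (by linarith) hn
    simp only [f]
    nlinarith
  have hf : Continuous f := by fun_prop
  obtain ⟨x, hx, hfx⟩ :=
    intermediate_value_Icc (by linarith : ε ≤ M) hf.continuousOn ⟨hf_ε.le, hf_M.le⟩
  simp only [f] at hfx
  exact ⟨x, hε.trans_le hx.1, by linarith⟩

theorem existsUnique_pos_pow_eq_mul_add {n : ℕ} (hn : 2 ≤ n) {A B : ℝ} (hA : 0 ≤ A)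
    (hAB : 0 < A + B) : ∃! x : ℝ, 0 < x ∧ x ^ n = B * x + A := by
  obtain ⟨x, hx, hroot⟩ := exists_pos_pow_eq_mul_add hn hA hAB
  have root_div : ∀ y : ℝ, 0 < y → y ^ n = B * y + A → y ^ (n - 1) - A / y = B := by
    intro y hy hy_root
    rw [← mul_pow_sub_one (by omega : n ≠ 0) y] at hy_root
    field_simp
    linarith
  refine ⟨x, ⟨hx, hroot⟩, fun y ⟨hy, hy_root⟩ => ?_⟩
  exact (strictMonoOn_pow_sub_div hA (by omega : n - 1 ≠ 0)).injOn hy hx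
    ((root_div y hy hy_root).trans (root_div x hx hroot).symm)

theorem unique_positive_root (n a b : ℕ) (hn : 2 ≤ n)
    (ha : a ≤ Nat.fib (n - 1)) (hb : b ≤ Nat.fib n)
    (hab : ¬(a = Nat.fib (n - 1) ∧ b = Nat.fib n)) :
    ∃! x : ℝ, 0 < x ∧
      x ^ n - ((Nat.fib n : ℝ) - b) * x - ((Nat.fib (n - 1) : ℝ) - a) = 0 := by
  have hA : (0 : ℝ) ≤ Nat.fib (n - 1) - a := sub_nonneg.2 (by exact_mod_cast ha)
  have hB : (0 : ℝ) ≤ Nat.fib n - b := sub_nonneg.2 (by exact_mod_cast hb)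
  have hAB : (0 : ℝ) < (Nat.fib (n - 1) - a) + (Nat.fib n - b) := by
    by_contra! h
    exact hab ⟨by exact_mod_cast (by linarith : (a : ℝ) = Nat.fib (n - 1)),
      by exact_mod_cast (by linarith : (b : ℝ) = Nat.fib n)⟩
  simpa only [sub_sub, sub_eq_zero, add_comm] using existsUnique_pos_pow_eq_mul_add hn hA hAB
end

section
/- Fix n ≥ 2 and for natural numbers a ≤ F_{n-1}, b ≤ F_n (not both maximal), let x(a,b) denote the unique positive root of x^n − (F_n − b)·x − (F_{n-1} − a). Then x(a,b) is strictly decreasing in a (for a < F_{n-1} with fixed b) and strictly decreasing in b (for b < F_n with fixed a), whenever the root is > 1. -/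
/-!
Dividing by `t > 0` turns `t ^ n - c * t - d` into `t ^ (n - 1) - c - d / t`, which is monotone on
`(0, ∞)` when `d ≥ 0`. Hence at any positive `y` where the polynomial is negative, `y` lies below
its positive root `x`. Removing a tile lowers `d` by one (making the polynomial at `y` equal to
`-1`) or lowers `c` by one (making it `-y`), so in both cases the new root lies below the old one.
-/

open Set

lemma monotoneOn_pow_sub_mul_sub_div {n : ℕ} (hn : n ≠ 0) (c : ℝ) {d : ℝ} (hd : 0 ≤ d) :
    MonotoneOn (fun t : ℝ => (t ^ n - c * t - d) / t) (Ioi 0) := by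
  obtain ⟨m, rfl⟩ := Nat.exists_eq_succ_of_ne_zero hn
  have hdiv : ∀ t : ℝ, 0 < t → (t ^ (m + 1) - c * t - d) / t = t ^ m - c - d / t := by
    intro t ht
    field_simp
    ring
  intro s (hs : 0 < s) t ht hst
  simp only [hdiv s hs, hdiv t ht]
  gcongr

lemma lt_of_pow_sub_mul_sub_neg {n : ℕ} (hn : n ≠ 0) {c d x y : ℝ} (hd : 0 ≤ d)
    (hx : 0 < x) (hy : 0 < y) (hroot : x ^ n - c * x - d = 0) (hneg : y ^ n - c * y - d < 0) :
    y < x := by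
  by_contra! hxy
  have hmono := monotoneOn_pow_sub_mul_sub_div hn c hd hx hy hxy
  simp only [hroot, zero_div] at hmono
  exact (div_neg_of_neg_of_pos hneg hy).not_ge hmono

theorem root_strict_decreasing_general (n : ℕ) :
    (∀ a b : ℕ, a + 1 ≤ Nat.fib (n - 1) → b ≤ Nat.fib n →
      ∀ x y : ℝ, 0 < x → 1 < x →
        x ^ n - ((Nat.fib n : ℝ) - b) * x - ((Nat.fib (n - 1) : ℝ) - a) = 0 →
        0 < y →
        y ^ n - ((Nat.fib n : ℝ) - b) * y - ((Nat.fib (n - 1) : ℝ) - (a + 1)) = 0 →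
        y < x) ∧
    (∀ a b : ℕ, a ≤ Nat.fib (n - 1) → b + 1 ≤ Nat.fib n →
      ∀ x y : ℝ, 0 < x → 1 < x →
        x ^ n - ((Nat.fib n : ℝ) - b) * x - ((Nat.fib (n - 1) : ℝ) - a) = 0 →
        0 < y →
        y ^ n - ((Nat.fib n : ℝ) - (b + 1)) * y - ((Nat.fib (n - 1) : ℝ) - a) = 0 →
        y < x) := by
  constructor
  · intro a b ha _ x y hx _ hxroot hy hyroot
    have hn : n ≠ 0 := by
      have := Nat.fib_pos.mp (by omega : 0 < Nat.fib (n - 1))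
      omega
    have ha' : (a : ℝ) ≤ Nat.fib (n - 1) := by exact_mod_cast (by omega : a ≤ Nat.fib (n - 1))
    refine lt_of_pow_sub_mul_sub_neg hn (sub_nonneg.mpr ha') hx hy hxroot ?_
    linarith
  · intro a b ha hb x y hx _ hxroot hy hyroot
    have hn : n ≠ 0 := (Nat.fib_pos.mp (by omega)).ne'
    have ha' : (a : ℝ) ≤ Nat.fib (n - 1) := by exact_mod_cast ha
    refine lt_of_pow_sub_mul_sub_neg hn (sub_nonneg.mpr ha') hx hy hxroot ?_
    linear_combination hyroot + hy

theorem root_strict_decreasing (n : ℕ) (hn : 2 ≤ n) :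
    (∀ a b : ℕ, a + 1 ≤ Nat.fib (n - 1) → b ≤ Nat.fib n →
      ∀ x y : ℝ, 0 < x → 1 < x →
        x ^ n - ((Nat.fib n : ℝ) - b) * x - ((Nat.fib (n - 1) : ℝ) - a) = 0 →
        0 < y →
        y ^ n - ((Nat.fib n : ℝ) - b) * y - ((Nat.fib (n - 1) : ℝ) - (a + 1)) = 0 →
        y < x) ∧
    (∀ a b : ℕ, a ≤ Nat.fib (n - 1) → b + 1 ≤ Nat.fib n →
      ∀ x y : ℝ, 0 < x → 1 < x →
        x ^ n - ((Nat.fib n : ℝ) - b) * x - ((Nat.fib (n - 1) : ℝ) - a) = 0 →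
        0 < y →
        y ^ n - ((Nat.fib n : ℝ) - (b + 1)) * y - ((Nat.fib (n - 1) : ℝ) - a) = 0 →
        y < x) :=
  root_strict_decreasing_general n
end

section
/- Let φ = (1+√5)/2. The unique positive root x₀ of x^5 − 4x − 3 satisfies x₀ < φ^{5/2}, and hence the similarity dimension d = 2 log_φ x₀ of the (5,0,1)-Ammann Chair Fractal is strictly less than 2. -/
/-!
Since `φ⁵ = 5φ + 3`, the quintic `x⁵ - 4x - 3` takes the value `φ > 0` at `φ`. A positive root
lies in `(1, ∞)`, where the quintic is strictly increasing, so `x₀ < φ < φ^(5/2)`.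
-/

open Real Set goldenRatio

theorem goldenRatio_pow_five : φ ^ 5 = 5 * φ + 3 := by
  have h := goldenRatio_mul_fib_succ_add_fib 4
  norm_num [Nat.fib_add_two] at h
  linarith

theorem strictMonoOn_pow_five_sub_four_mul :
    StrictMonoOn (fun x : ℝ ↦ x ^ 5 - 4 * x) (Ici 1) := by
  intro a (ha : 1 ≤ a) b (hb : 1 ≤ b) hab
  have hsum : 5 ≤ b ^ 4 + b ^ 3 * a + b ^ 2 * a ^ 2 + b * a ^ 3 + a ^ 4 :=
    calc (5 : ℝ) = 1 ^ 4 + 1 ^ 3 * 1 + 1 ^ 2 * 1 ^ 2 + 1 * 1 ^ 3 + 1 ^ 4 := by norm_num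
      _ ≤ b ^ 4 + b ^ 3 * a + b ^ 2 * a ^ 2 + b * a ^ 3 + a ^ 4 := by gcongr
  have hfactor :
      b ^ 5 - a ^ 5 = (b - a) * (b ^ 4 + b ^ 3 * a + b ^ 2 * a ^ 2 + b * a ^ 3 + a ^ 4) := by
    ring
  show a ^ 5 - 4 * a < b ^ 5 - 4 * b
  nlinarith

theorem one_lt_of_pow_five_sub_four_mul_sub_three_eq_zero {x : ℝ} (hx : 0 < x)
    (hroot : x ^ 5 - 4 * x - 3 = 0) : 1 < x := by
  by_contra! h
  linarith [pow_le_one₀ (n := 5) hx.le h]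

theorem lt_goldenRatio_of_pow_five_sub_four_mul_sub_three_eq_zero {x : ℝ} (hx : 0 < x)
    (hroot : x ^ 5 - 4 * x - 3 = 0) : x < φ := by
  have hx1 := one_lt_of_pow_five_sub_four_mul_sub_three_eq_zero hx hroot
  refine (strictMonoOn_pow_five_sub_four_mul.lt_iff_lt hx1.le one_lt_goldenRatio.le).mp ?_
  simp only [goldenRatio_pow_five]
  linarith [goldenRatio_pos]

theorem root_lt_phi_pow (x₀ : ℝ) (hx : 0 < x₀) (hroot : x₀ ^ 5 - 4 * x₀ - 3 = 0) :
    x₀ < ((1 + Real.sqrt 5) / 2) ^ ((5 : ℝ) / 2) ∧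
    2 * Real.log x₀ / Real.log ((1 + Real.sqrt 5) / 2) < 2 := by
  have hlt : x₀ < φ := lt_goldenRatio_of_pow_five_sub_four_mul_sub_three_eq_zero hx hroot
  refine ⟨hlt.trans (self_lt_rpow_of_one_lt one_lt_goldenRatio (by norm_num)), ?_⟩
  rw [div_lt_iff₀ (log_pos one_lt_goldenRatio)]
  linarith [log_lt_log hx hlt]
end

section
/- Let n ≥ 2, a ≤ F_{n-1}, b ≤ F_n natural numbers, not both maximal. The unique positive root x₀ of x^n − (F_n − b)·x − (F_{n-1} − a) satisfies 1 ≤ x₀ ≤ φ^{n/2}, where φ = (1+√5)/2; hence the similarity dimension d = 2 log_φ x₀ satisfies 0 ≤ d ≤ 2. -/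
theorem root_bounds (n a b : ℕ) (hn : 2 ≤ n)
    (ha : a ≤ Nat.fib (n - 1)) (hb : b ≤ Nat.fib n)
    (hab : ¬(a = Nat.fib (n - 1) ∧ b = Nat.fib n))
    (x₀ : ℝ) (hx₀ : 0 < x₀)
    (hroot : x₀ ^ n - ((Nat.fib n : ℝ) - b) * x₀ - ((Nat.fib (n - 1) : ℝ) - a) = 0) :
    (1 ≤ x₀ ∧ x₀ ≤ ((1 + Real.sqrt 5) / 2) ^ ((n : ℝ) / 2)) ∧
    0 ≤ 2 * Real.log x₀ / Real.log ((1 + Real.sqrt 5) / 2) ∧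
    2 * Real.log x₀ / Real.log ((1 + Real.sqrt 5) / 2) ≤ 2 := by
  have hφ1 : (1 : ℝ) < Real.goldenRatio := Real.one_lt_goldenRatio
  have hφ0 : (0 : ℝ) < Real.goldenRatio := Real.goldenRatio_pos
  -- φ ^ n = φ * F_n + F_{n-1}
  have hpow : Real.goldenRatio ^ n = Real.goldenRatio * Nat.fib n + Nat.fib (n - 1) := by
    have h := Real.goldenRatio_mul_fib_succ_add_fib (n - 1)
    rw [show n - 1 + 1 = n from by omega] at h
    linarith
  have hfib1 : (1 : ℝ) ≤ (Nat.fib (n - 1) : ℝ) := by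
    have : 0 < Nat.fib (n - 1) := Nat.fib_pos.mpr (by omega)
    exact_mod_cast this
  have hcast_a : (a : ℝ) ≤ (Nat.fib (n - 1) : ℝ) := by exact_mod_cast ha
  have hcast_b : (b : ℝ) ≤ (Nat.fib n : ℝ) := by exact_mod_cast hb
  have hor : a + 1 ≤ Nat.fib (n - 1) ∨ b + 1 ≤ Nat.fib n := by omega
  -- lower bound
  have hge1 : 1 ≤ x₀ := by
    by_contra hlt
    push_neg at hlt
    have hpn2 : x₀ ^ n ≤ x₀ ^ 2 := pow_le_pow_of_le_one hx₀.le hlt.le hn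
    rcases hor with h | h
    · have hd1 : (1 : ℝ) ≤ (Nat.fib (n - 1) : ℝ) - a := by
        have : (a : ℝ) + 1 ≤ (Nat.fib (n - 1) : ℝ) := by exact_mod_cast h
        linarith
      have hc0 : (0 : ℝ) ≤ ((Nat.fib n : ℝ) - b) * x₀ :=
        mul_nonneg (by linarith) hx₀.le
      nlinarith
    · have hc1 : (1 : ℝ) ≤ (Nat.fib n : ℝ) - b := by
        have : (b : ℝ) + 1 ≤ (Nat.fib n : ℝ) := by exact_mod_cast h
        linarith
      have hd0 : (0 : ℝ) ≤ (Nat.fib (n - 1) : ℝ) - a := by linarith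
      nlinarith
  -- upper bound: x₀ ≤ φ
  have hleφ : x₀ ≤ Real.goldenRatio := by
    by_contra hlt
    push_neg at hlt
    have h1 : Real.goldenRatio ^ (n - 1) ≤ x₀ ^ (n - 1) :=
      pow_le_pow_left₀ hφ0.le hlt.le _
    have key : x₀ * Real.goldenRatio ^ (n - 1) ≤ x₀ ^ n := by
      calc x₀ * Real.goldenRatio ^ (n - 1) ≤ x₀ * x₀ ^ (n - 1) :=
            mul_le_mul_of_nonneg_left h1 hx₀.le
        _ = x₀ ^ n := by rw [← pow_succ', show n - 1 + 1 = n from by omega]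
    have hmul : Real.goldenRatio * Real.goldenRatio ^ (n - 1) = Real.goldenRatio ^ n := by
      rw [← pow_succ', show n - 1 + 1 = n from by omega]
    have e1 : x₀ * (Real.goldenRatio * (Nat.fib n : ℝ) + (Nat.fib (n - 1) : ℝ))
        ≤ Real.goldenRatio * x₀ ^ n := by
      have h2 := mul_le_mul_of_nonneg_left key hφ0.le
      calc x₀ * (Real.goldenRatio * (Nat.fib n : ℝ) + (Nat.fib (n - 1) : ℝ))
          = x₀ * Real.goldenRatio ^ n := by rw [hpow]
        _ = Real.goldenRatio * (x₀ * Real.goldenRatio ^ (n - 1)) := by rw [← hmul]; ring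
        _ ≤ Real.goldenRatio * x₀ ^ n := h2
    have e2 : Real.goldenRatio * x₀ ^ n
        ≤ Real.goldenRatio * ((Nat.fib n : ℝ) * x₀ + (Nat.fib (n - 1) : ℝ)) := by
      apply mul_le_mul_of_nonneg_left _ hφ0.le
      nlinarith [mul_nonneg (Nat.cast_nonneg (α := ℝ) b) hx₀.le,
        Nat.cast_nonneg (α := ℝ) a]
    have hF : (0 : ℝ) < (Nat.fib (n - 1) : ℝ) := lt_of_lt_of_le one_pos hfib1
    nlinarith [e1, e2, mul_lt_mul_of_pos_left hlt hF]
  have hlogφ : 0 < Real.log ((1 + Real.sqrt 5) / 2) := Real.log_pos hφ1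
  have hlogx : 0 ≤ Real.log x₀ := Real.log_nonneg hge1
  have hloglog : Real.log x₀ ≤ Real.log ((1 + Real.sqrt 5) / 2) :=
    Real.log_le_log hx₀ hleφ
  refine ⟨⟨hge1, ?_⟩, ?_, ?_⟩
  · calc x₀ ≤ Real.goldenRatio := hleφ
      _ = ((1 + Real.sqrt 5) / 2) ^ (1 : ℝ) := by rw [Real.rpow_one]
      _ ≤ ((1 + Real.sqrt 5) / 2) ^ ((n : ℝ) / 2) := by
          apply Real.rpow_le_rpow_of_exponent_le hφ1.le
          have : (2 : ℝ) ≤ (n : ℝ) := by exact_mod_cast hn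
          linarith
  · positivity
  · rw [div_le_iff₀ hlogφ]
    linarith
end

section
/- Let x₀ be the unique positive root of x^n − (F_n − b)x − (F_{n-1} − a) with n ≥ 2, 0 ≤ a ≤ F_{n-1}, 0 ≤ b ≤ F_n, not both maximal, and x₀ > 1. Then the unique positive root x₁ of x^{n} − (F_n − b)x − (F_{n-1} − a + 1) (one fewer small tile removed, assuming a ≥ 1) satisfies x₁ > x₀ and x₁^n − x₀^n ≤ 1 + (F_n − b)(x₁ − x₀); consequently x₁ − x₀ ≤ 1/(n·x₀^{n-1} − (F_n − b)). -/
/-!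
Write `c = F_n - b` and `d = F_{n-1} - a ≥ 0`, so that `x₀ⁿ = c x₀ + d` and `x₁ⁿ = c x₁ + d + 1`.
Since `d ≥ 0` forces `x₀ⁿ⁻¹ ≥ c`, for `0 ≤ y ≤ x₀` we get
`x₀ⁿ - yⁿ ≥ x₀ⁿ⁻¹ (x₀ - y) ≥ c (x₀ - y)`, so `yⁿ - c y ≤ d` there, and hence `x₁ > x₀`. Then `x₁ⁿ - x₀ⁿ = 1 + c (x₁ - x₀)` exactly, and the
tangent-line bound `x₁ⁿ - x₀ⁿ ≥ n x₀ⁿ⁻¹ (x₁ - x₀)` of the convex power gives the last estimate.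
-/

section PowSubPow

variable {R : Type*} [CommRing R] [PartialOrder R] [IsOrderedRing R] {x y : R}

theorem pow_mul_sub_le_pow_succ_sub_pow_succ (hx : 0 ≤ x) (hxy : x ≤ y) (k : ℕ) :
    y ^ k * (y - x) ≤ y ^ (k + 1) - x ^ (k + 1) := by
  have hpow : x ^ k ≤ y ^ k := pow_le_pow_left₀ hx hxy k
  calc y ^ k * (y - x) = y ^ (k + 1) - x ^ (k + 1) - x * (y ^ k - x ^ k) := by ring
    _ ≤ y ^ (k + 1) - x ^ (k + 1) := sub_le_self _ (mul_nonneg hx (sub_nonneg.2 hpow))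

theorem succ_mul_pow_mul_sub_le_pow_succ_sub_pow_succ (hx : 0 ≤ x) (hxy : x ≤ y) (k : ℕ) :
    ((k : R) + 1) * x ^ k * (y - x) ≤ y ^ (k + 1) - x ^ (k + 1) := by
  induction k with
  | zero => simp
  | succ k ih =>
    have hpow : x ^ (k + 1) ≤ y ^ (k + 1) := pow_le_pow_left₀ hx hxy (k + 1)
    push_cast
    calc ((k : R) + 1 + 1) * x ^ (k + 1) * (y - x)
        = x * (((k : R) + 1) * x ^ k * (y - x)) + x ^ (k + 1) * (y - x) := by ring
      _ ≤ x * (y ^ (k + 1) - x ^ (k + 1)) + y ^ (k + 1) * (y - x) := by gcongr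
      _ = y ^ (k + 1 + 1) - x ^ (k + 1 + 1) := by ring

end PowSubPow

variable {R : Type*} [CommRing R] [LinearOrder R] [IsStrictOrderedRing R]

theorem lt_of_pow_succ_eq_mul_add_of_lt {k : ℕ} {c d d' x y : R} (hd : 0 ≤ d) (hx : 0 < x)
    (hy : 0 ≤ y) (hxroot : x ^ (k + 1) = c * x + d) (hyroot : y ^ (k + 1) = c * y + d')
    (hdd' : d < d') : x < y := by
  by_contra! hyx
  have hc : c ≤ x ^ k := by
    refine le_of_mul_le_mul_left ?_ hx
    rw [← pow_succ']
    linarith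
  have hgrowth : c * (x - y) ≤ x ^ (k + 1) - y ^ (k + 1) :=
    (mul_le_mul_of_nonneg_right hc (sub_nonneg.2 hyx)).trans
      (pow_mul_sub_le_pow_succ_sub_pow_succ hy hyx k)
  linarith

theorem root_perturbation_bound_general (n a b : ℕ) (hn : 2 ≤ n)
    (ha : a ≤ Nat.fib (n - 1))
    (x₀ x₁ : ℝ) (hx₀ : 0 < x₀)
    (hroot₀ : x₀ ^ n - ((Nat.fib n : ℝ) - b) * x₀ - ((Nat.fib (n - 1) : ℝ) - a) = 0)
    (hx₁ : 0 < x₁)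
    (hroot₁ :
      x₁ ^ n - ((Nat.fib n : ℝ) - b) * x₁ - ((Nat.fib (n - 1) : ℝ) - a + 1) = 0) :
    x₀ < x₁ ∧
    x₁ ^ n - x₀ ^ n ≤ 1 + ((Nat.fib n : ℝ) - b) * (x₁ - x₀) ∧
    (0 < (n : ℝ) * x₀ ^ (n - 1) - ((Nat.fib n : ℝ) - b) →
      x₁ - x₀ ≤ 1 / ((n : ℝ) * x₀ ^ (n - 1) - ((Nat.fib n : ℝ) - b))) := by
  obtain ⟨m, rfl⟩ : ∃ m, n = m + 1 := ⟨n - 1, by omega⟩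
  rw [Nat.add_sub_cancel] at *
  set c : ℝ := (Nat.fib (m + 1) : ℝ) - b
  set d : ℝ := (Nat.fib m : ℝ) - a
  have hd : 0 ≤ d := sub_nonneg.2 (by exact_mod_cast ha)
  have hx₀root : x₀ ^ (m + 1) = c * x₀ + d := by linarith
  have hx₁root : x₁ ^ (m + 1) = c * x₁ + (d + 1) := by linarith
  have hlt : x₀ < x₁ :=
    lt_of_pow_succ_eq_mul_add_of_lt hd hx₀ hx₁.le hx₀root hx₁root (lt_add_one d)
  refine ⟨hlt, by linarith, fun hderiv => ?_⟩
  have htangent := succ_mul_pow_mul_sub_le_pow_succ_sub_pow_succ hx₀.le hlt.le m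
  rw [le_div_iff₀ hderiv]
  push_cast
  linarith

theorem root_perturbation_bound (n a b : ℕ) (hn : 2 ≤ n) (ha1 : 1 ≤ a)
    (ha : a ≤ Nat.fib (n - 1)) (hb : b ≤ Nat.fib n)
    (hab : ¬(a = Nat.fib (n - 1) ∧ b = Nat.fib n))
    (x₀ x₁ : ℝ) (hx₀ : 0 < x₀) (hx₀1 : 1 < x₀)
    (hroot₀ : x₀ ^ n - ((Nat.fib n : ℝ) - b) * x₀ - ((Nat.fib (n - 1) : ℝ) - a) = 0)
    (hx₁ : 0 < x₁)
    (hroot₁ :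
      x₁ ^ n - ((Nat.fib n : ℝ) - b) * x₁ - ((Nat.fib (n - 1) : ℝ) - a + 1) = 0) :
    x₀ < x₁ ∧
    x₁ ^ n - x₀ ^ n ≤ 1 + ((Nat.fib n : ℝ) - b) * (x₁ - x₀) ∧
    (0 < (n : ℝ) * x₀ ^ (n - 1) - ((Nat.fib n : ℝ) - b) →
      x₁ - x₀ ≤ 1 / ((n : ℝ) * x₀ ^ (n - 1) - ((Nat.fib n : ℝ) - b))) :=
  root_perturbation_bound_general n a b hn ha x₀ x₁ hx₀ hroot₀ hx₁ hroot₁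
end

section
/- The set D = { 2·log x / log φ : x is the unique positive real root of x^n − (F_n − b)x − (F_{n-1} − a) for some n ≥ 2, natural numbers a ≤ F_{n-1}, b ≤ F_n not both maximal } is dense in the interval [0, 2]. -/
/-!
Choosing `a = F_{n-1}` and `b = F_n - k` with `1 ≤ k ≤ F_n` turns the polynomial into
`x ^ n - k * x`, whose positive root is `k ^ (1 / (n - 1))`; so `D` contains every
`2 * log k / ((n - 1) * log φ)`. For fixed `m = n - 1` the numbers `log k`, `1 ≤ k ≤ F_{m+1}`,
start at `0`, have gaps at most `log 2`, and reach `log F_{m+1} ≥ (m - 1) * log φ`. Hence every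
`t ∈ [0, 2]` lies within `O(1 / m)` of a point of `D`.
-/

open Real goldenRatio

def ammannChairDimensions : Set ℝ :=
  {d : ℝ | ∃ n : ℕ, 2 ≤ n ∧ ∃ a b : ℕ,
    a ≤ Nat.fib (n - 1) ∧ b ≤ Nat.fib n ∧
    ¬(a = Nat.fib (n - 1) ∧ b = Nat.fib n) ∧
    ∃ x : ℝ, 0 < x ∧
      x ^ n - ((Nat.fib n : ℝ) - b) * x - ((Nat.fib (n - 1) : ℝ) - a) = 0 ∧
      d = 2 * Real.log x / Real.log ((1 + Real.sqrt 5) / 2)}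

theorem goldenRatio_pow_le_mul_fib_succ (n : ℕ) : φ ^ n ≤ φ * Nat.fib (n + 1) := by
  have hfib : (Nat.fib n : ℝ) ≤ Nat.fib (n + 1) := by exact_mod_cast Nat.fib_le_fib_succ
  rw [← fib_succ_sub_goldenConj_mul_fib, ← one_sub_goldenRatio]
  nlinarith [goldenConj_neg]

theorem exists_nat_log_mem_Ioc {y : ℝ} {K : ℕ} (hK : 1 ≤ K) (hy0 : 0 ≤ y) (hyK : y ≤ log K) :
    ∃ k : ℕ, 1 ≤ k ∧ k ≤ K ∧ log k ∈ Set.Ioc (y - log 2) y := by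
  set k := ⌊exp y⌋₊
  have hk : 1 ≤ k := (Nat.one_le_floor_iff _).2 (one_le_exp hy0)
  have hk0 : (0 : ℝ) < k := by exact_mod_cast hk
  have hk_le : (k : ℝ) ≤ exp y := Nat.floor_le (exp_pos y).le
  have hlt_succ : exp y < k + 1 := Nat.lt_floor_add_one _
  refine ⟨k, hk, Nat.floor_le_of_le ?_, ?_, ?_⟩
  · calc exp y ≤ exp (log K) := exp_le_exp.2 hyK
      _ = K := exp_log (by exact_mod_cast hK)
  · have h2k : exp y < 2 * k := by
      have : (1 : ℝ) ≤ k := by exact_mod_cast hk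
      linarith
    have := log_lt_log (exp_pos y) h2k
    rw [log_exp, log_mul two_ne_zero hk0.ne'] at this
    linarith
  · simpa using log_le_log hk0 hk_le

theorem two_mul_log_div_mem_ammannChairDimensions {m k : ℕ} (hm : 1 ≤ m) (hk : 1 ≤ k)
    (hkF : k ≤ Nat.fib (m + 1)) :
    2 * log k / (m * log φ) ∈ ammannChairDimensions := by
  have hk0 : (0 : ℝ) < k := by exact_mod_cast hk
  have hm0 : (m : ℝ) ≠ 0 := by positivity
  set x : ℝ := (k : ℝ) ^ (m : ℝ)⁻¹
  have hx_pow : x ^ m = k := by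
    rw [← rpow_natCast, ← rpow_mul hk0.le, inv_mul_cancel₀ hm0, rpow_one]
  refine ⟨m + 1, by omega, Nat.fib m, Nat.fib (m + 1) - k, le_rfl, Nat.sub_le _ _,
    fun h => by omega, x, rpow_pos_of_pos hk0 _, ?_, ?_⟩
  · rw [Nat.add_sub_cancel, Nat.cast_sub hkF, pow_succ, hx_pow]
    ring
  · rw [log_rpow hk0]
    field_simp

theorem exists_mem_ammannChairDimensions_abs_sub_le {t : ℝ} (ht : t ∈ Set.Icc (0 : ℝ) 2) {m : ℕ}
    (hm : 1 ≤ m) : ∃ d ∈ ammannChairDimensions, |t - d| ≤ 2 * (log φ + log 2) / log φ / m := by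
  have hc : 0 < log φ := log_pos one_lt_goldenRatio
  have hmc : 0 < m * log φ := by positivity
  have hF : 1 ≤ Nat.fib (m + 1) := Nat.fib_pos.2 (by omega)
  have hlogF : m * log φ ≤ log φ + log (Nat.fib (m + 1)) := by
    rw [← log_pow, ← log_mul goldenRatio_ne_zero (by positivity)]
    exact log_le_log (by positivity) (goldenRatio_pow_le_mul_fib_succ m)
  set y := min (t * (m * log φ) / 2) (log (Nat.fib (m + 1)))
  have hy0 : 0 ≤ y := le_min (by have := ht.1; positivity) (log_natCast_nonneg _)
  have hy : t * (m * log φ) / 2 - log φ ≤ y := le_min (by linarith) (by nlinarith [ht.2])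
  obtain ⟨k, hk1, hkF, hk_gt, hk_le⟩ := exists_nat_log_mem_Ioc hF hy0 (min_le_right _ _)
  refine ⟨_, two_mul_log_div_mem_ammannChairDimensions hm hk1 hkF, ?_⟩
  have hy_le : y ≤ t * (m * log φ) / 2 := min_le_left _ _
  rw [show t - 2 * log k / (m * log φ) = 2 * (t * (m * log φ) / 2 - log k) / (m * log φ) by
    field_simp, abs_of_nonneg (by apply div_nonneg <;> linarith), div_div, mul_comm (log φ)]
  gcongr
  linarith

theorem dimensions_dense :
    Set.Icc (0 : ℝ) 2 ⊆
      closure {d : ℝ | ∃ n : ℕ, 2 ≤ n ∧ ∃ a b : ℕ,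
        a ≤ Nat.fib (n - 1) ∧ b ≤ Nat.fib n ∧
        ¬(a = Nat.fib (n - 1) ∧ b = Nat.fib n) ∧
        ∃ x : ℝ, 0 < x ∧
          x ^ n - ((Nat.fib n : ℝ) - b) * x - ((Nat.fib (n - 1) : ℝ) - a) = 0 ∧
          d = 2 * Real.log x / Real.log ((1 + Real.sqrt 5) / 2)} := by
  intro t ht
  rw [Metric.mem_closure_iff]
  intro ε hε
  set C := 2 * (log φ + log 2) / log φ
  have hC : 0 < C := by have := log_pos one_lt_goldenRatio; positivity
  obtain ⟨m, hm⟩ := exists_nat_gt (C / ε)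
  have hm0 : (0 : ℝ) < m := (div_pos hC hε).trans hm
  obtain ⟨d, hd, hdist⟩ :=
    exists_mem_ammannChairDimensions_abs_sub_le ht (m := m) (by exact_mod_cast hm0)
  refine ⟨d, hd, ?_⟩
  calc dist t d ≤ C / m := (dist_eq t d).trans_le hdist
    _ < ε := by rw [div_lt_iff₀ hm0, mul_comm]; exact (div_lt_iff₀ hε).1 hm
end
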